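/- Let G be a finite connected simple graph with n vertices, at least one edge, minimum degree δ(G), spectral radius ρ(G), and clique number ω(G). Then π(G) ≥ ρ(G) + (n − ω(G) + 1)·⌈δ(G)/(ω(G)−1)⌉, with equality if and only if G is regular and admits a K_{ω(G)}-decomposition. -/

import Mathlib

/-!
Let `P` be a clique partition and `k v` the number of its cliques through `v`, so that
`∑ s ∈ P, #s = ∑ v, k v`. Since the cliques through `v` meet only in `v`,
`deg v = ∑ (#s - 1) ≤ (ω - 1) k v`, whence `k v ≥ C := ⌈δ / (ω - 1)⌉`.

Take an eigenvector for `ρ`, replace it by its entrywise absolute value and scale its maximum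
to `1`: the result `y` satisfies `ρ y ≤ A y` and `0 ≤ y ≤ 1`. Bounding `(ω - 1) k v` below by
the convex combination `(1 - y v) (ω - 1) C + y v deg v` and summing gives, with `t = ∑ y`,
`(ω - 1) π ≥ (ω - 1) C n + t (ρ - (ω - 1) C)`. If `ρ > (ω - 1) C` then, as `C ≥ 1`,
`t ≥ 1 + ρ > ω - 1` yields the bound strictly; otherwise `π ≥ C n` already does, strictly
unless `ρ = (ω - 1) C`.

In the equality case every `k v = C`, so `deg v ≤ ρ` everywhere, and in a connected graph this
forces `y = 1` and regularity; then every clique through `v` has `ω` vertices.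
-/

open Finset SimpleGraph Polynomial

variable {V : Type*}

/-- A clique partition of `G`: a set of cliques of `G` such that every edge of `G`
lies in exactly one of them. -/
def IsCliquePartition [DecidableEq V] (G : SimpleGraph V) (P : Finset (Finset V)) : Prop :=
  (∀ s ∈ P, G.IsClique (s : Set V)) ∧
    ∀ u v : V, G.Adj u v → ∃! s, s ∈ P ∧ u ∈ s ∧ v ∈ s

/-- The spectral radius of a finite graph: the largest eigenvalue of its adjacency matrix. -/
noncomputable def specRad [Fintype V] [DecidableEq V] (G : SimpleGraph V)
    [DecidableRel G.Adj] : ℝ :=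
  sSup {μ : ℝ | Module.End.HasEigenvalue (Matrix.toLin' (G.adjMatrix ℝ)) μ}

/-- `cpT G t` : the minimum number of cliques in a clique partition of `G` in which
every clique has at most `t` vertices. -/
noncomputable def cpT [DecidableEq V] (G : SimpleGraph V) (t : ℕ) : ℕ :=
  sInf {m | ∃ P : Finset (Finset V),
    IsCliquePartition G P ∧ (∀ s ∈ P, s.card ≤ t) ∧ P.card = m}

/-- `cp G` : the clique partition number of `G`. -/
noncomputable def cp [DecidableEq V] (G : SimpleGraph V) : ℕ :=
  sInf {m | ∃ P : Finset (Finset V), IsCliquePartition G P ∧ P.card = m}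

/-- `piT G t` : the minimum total size of a clique partition of `G` in which
every clique has at most `t` vertices. -/
noncomputable def piT [DecidableEq V] (G : SimpleGraph V) (t : ℕ) : ℕ :=
  sInf {m | ∃ P : Finset (Finset V),
    IsCliquePartition G P ∧ (∀ s ∈ P, s.card ≤ t) ∧ ∑ s ∈ P, s.card = m}

/-- `piTotal G` : the minimum total size of a clique partition of `G`. -/
noncomputable def piTotal [DecidableEq V] (G : SimpleGraph V) : ℕ :=
  sInf {m | ∃ P : Finset (Finset V), IsCliquePartition G P ∧ ∑ s ∈ P, s.card = m}

/-- `kT G t` : the maximum number of pairwise edge-disjoint `t`-cliques in `G`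
(`t`-cliques are edge-disjoint iff they share at most one vertex). -/
noncomputable def kT [DecidableEq V] (G : SimpleGraph V) (t : ℕ) : ℕ :=
  sSup {m | ∃ S : Finset (Finset V), (∀ s ∈ S, G.IsNClique t s) ∧
    (∀ s₁ ∈ S, ∀ s₂ ∈ S, s₁ ≠ s₂ → (s₁ ∩ s₂).card ≤ 1) ∧ S.card = m}


open Matrix Module.End

lemma Matrix.hasEigenvalue_toLin'_iff {n R : Type*} [Fintype n] [DecidableEq n] [CommRing R]
    (A : Matrix n n R) {μ : R} : HasEigenvalue (toLin' A) μ ↔ ∃ x ≠ 0, A *ᵥ x = μ • x := by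
  simp [hasEigenvalue_iff, Submodule.ne_bot_iff, and_comm]

lemma Finset.sum_card_eq_sum_card_filter_mem {α : Type*} [Fintype α] [DecidableEq α]
    (B : Finset (Finset α)) : ∑ s ∈ B, #s = ∑ a, #{s ∈ B | a ∈ s} := by
  simp_rw [card_filter, sum_comm (s := univ), ← card_filter, filter_mem_eq_inter, univ_inter]

lemma SimpleGraph.two_le_cliqueNum_of_adj [Fintype V] {G : SimpleGraph V} {a b : V}
    (hab : G.Adj a b) : 2 ≤ G.cliqueNum := by
  classical
  have hclique : G.IsClique ((({a, b} : Finset V)) : Set V) := by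
    simpa using isClique_pair.mpr fun _ => hab
  simpa [card_pair hab.ne] using hclique.card_le_cliqueNum

namespace SimpleGraph

section Subeigenvector

variable [Fintype V] (G : SimpleGraph V) [DecidableRel G.Adj]

lemma sum_sum_neighborFinset (f : V → ℝ) :
    ∑ v, ∑ w ∈ G.neighborFinset v, f w = ∑ v, G.degree v * f v := by
  simp_rw [neighborFinset_eq_filter, sum_filter]
  rw [sum_comm]
  simp [← sum_filter, G.adj_comm, ← neighborFinset_eq_filter]

/-- Plays the role of a Perron vector for `μ`, scaled so that its largest entry is `y u = 1`. -/
structure IsSubeigenvector (μ : ℝ) (y : V → ℝ) (u : V) : Prop where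
  nonneg : ∀ v, 0 ≤ y v
  le_one : ∀ v, y v ≤ 1
  apply_eq_one : y u = 1
  le_sum_neighbor : ∀ v, μ * y v ≤ ∑ w ∈ G.neighborFinset v, y w

namespace IsSubeigenvector

variable {G} {μ : ℝ} {y : V → ℝ} {u : V}

lemma le_degree (hy : G.IsSubeigenvector μ y u) : μ ≤ G.degree u :=
  calc μ = μ * y u := by rw [hy.apply_eq_one, mul_one]
    _ ≤ ∑ w ∈ G.neighborFinset u, y w := hy.le_sum_neighbor u
    _ ≤ ∑ w ∈ G.neighborFinset u, 1 := sum_le_sum fun w _ => hy.le_one w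
    _ = G.degree u := by simp

lemma one_add_le_sum (hy : G.IsSubeigenvector μ y u) : 1 + μ ≤ ∑ v, y v := by
  classical
  have hN : G.neighborFinset u ⊆ univ.erase u := fun w hw =>
    mem_erase.mpr ⟨(G.ne_of_adj ((G.mem_neighborFinset u w).mp hw)).symm, mem_univ w⟩
  calc 1 + μ = y u + μ * y u := by rw [hy.apply_eq_one, mul_one]
    _ ≤ y u + ∑ w ∈ univ.erase u, y w := by
      gcongr
      exact (hy.le_sum_neighbor u).trans
        (sum_le_sum_of_subset_of_nonneg hN fun w _ _ => hy.nonneg w)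
    _ = ∑ v, y v := add_sum_erase _ _ (mem_univ u)

lemma mul_sum_le_sum_degree_mul (hy : G.IsSubeigenvector μ y u) :
    μ * ∑ v, y v ≤ ∑ v, G.degree v * y v := by
  rw [mul_sum, ← sum_sum_neighborFinset]
  exact sum_le_sum fun v _ => hy.le_sum_neighbor v

lemma degree_eq (hy : G.IsSubeigenvector μ y u) (hG : G.Preconnected)
    (hdeg : ∀ v, G.degree v ≤ μ) (v : V) : G.degree v = μ := by
  -- at a vertex with `y v = 1`, the chain `μ ≤ ∑ y w ≤ deg v ≤ μ` is tight
  have step : ∀ v, y v = 1 → (∀ w, G.Adj v w → y w = 1) ∧ (G.degree v : ℝ) = μ := by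
    intro v hv
    have hle : ∀ w ∈ G.neighborFinset v, y w ≤ 1 := fun w _ => hy.le_one w
    have hsum : ∑ w ∈ G.neighborFinset v, y w ≤ G.degree v := by
      simpa using sum_le_sum hle
    have hμ : μ ≤ ∑ w ∈ G.neighborFinset v, y w := by simpa [hv] using hy.le_sum_neighbor v
    have heq : ∑ w ∈ G.neighborFinset v, y w = ∑ w ∈ G.neighborFinset v, 1 := by
      simp only [sum_const, card_neighborFinset_eq_degree, nsmul_one]
      linarith [hdeg v]
    exact ⟨fun w hw => (sum_eq_sum_iff_of_le hle).mp heq w ((G.mem_neighborFinset v w).mpr hw),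
      by linarith [hdeg v]⟩
  have hwalk : ∀ a b, G.Walk a b → y a = 1 → y b = 1 := by
    intro a b p
    induction p with
    | nil => exact id
    | cons h _ ih => exact fun ha => ih ((step _ ha).1 _ h)
  obtain ⟨p⟩ := hG u v
  exact (step v (hwalk u v p hy.apply_eq_one)).2

end IsSubeigenvector

end Subeigenvector

section Spectrum

variable [Fintype V] [DecidableEq V] (G : SimpleGraph V) [DecidableRel G.Adj]

lemma hasEigenvalue_specRad [Nonempty V] : HasEigenvalue (toLin' (G.adjMatrix ℝ)) (specRad G) := by
  have hμ := (G.isHermitian_adjMatrix ℝ).eigenvalues_mem_spectrum_real (Classical.arbitrary V)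
  rw [← spectrum_toLin'] at hμ
  exact Set.Nonempty.csSup_mem ⟨_, hasEigenvalue_iff_mem_spectrum.mpr hμ⟩ (finite_hasEigenvalue _)

variable {G} in
lemma le_specRad {μ : ℝ} (hμ : HasEigenvalue (toLin' (G.adjMatrix ℝ)) μ) : μ ≤ specRad G :=
  le_csSup (finite_hasEigenvalue _).bddAbove hμ

lemma exists_isSubeigenvector_specRad [Nonempty V] :
    ∃ y u, G.IsSubeigenvector (specRad G) y u := by
  obtain ⟨x, hx0, hx⟩ := (hasEigenvalue_toLin'_iff _).mp G.hasEigenvalue_specRad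
  obtain ⟨u, -, hu⟩ := exists_max_image univ (fun v => |x v|) univ_nonempty
  have hxu : 0 < |x u| := by
    obtain ⟨w, hw⟩ := Function.ne_iff.mp hx0
    exact (abs_pos.mpr hw).trans_le (hu w (mem_univ w))
  refine ⟨fun v => |x v| / |x u|, u, ⟨fun v => by positivity,
    fun v => (div_le_one hxu).mpr (hu v (mem_univ v)), div_self hxu.ne', fun v => ?_⟩⟩
  have hv : specRad G * x v = ∑ w ∈ G.neighborFinset v, x w := by
    rw [← adjMatrix_mulVec_apply, hx, Pi.smul_apply, smul_eq_mul]
  rw [← sum_div, mul_div_assoc', div_le_div_iff_of_pos_right hxu]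
  calc specRad G * |x v| ≤ |specRad G * x v| := by rw [abs_mul]; gcongr; exact le_abs_self _
    _ ≤ ∑ w ∈ G.neighborFinset v, |x w| := hv ▸ abs_sum_le_sum_abs _ _

variable {G} in
lemma IsRegularOfDegree.specRad_eq [Nonempty V] {d : ℕ} (hd : G.IsRegularOfDegree d) :
    specRad G = d := by
  obtain ⟨y, u, hy⟩ := G.exists_isSubeigenvector_specRad
  refine le_antisymm (hd u ▸ hy.le_degree) (le_specRad ((hasEigenvalue_toLin'_iff _).mpr ?_))
  refine ⟨Function.const V 1, Function.ne_iff.mpr ⟨Classical.arbitrary V, one_ne_zero⟩, ?_⟩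
  ext v
  simp [hd v]

end Spectrum

end SimpleGraph

namespace IsCliquePartition

variable [DecidableEq V] {G : SimpleGraph V} {P : Finset (Finset V)}

lemma isClique (hP : IsCliquePartition G P) {s : Finset V} (hs : s ∈ P) :
    G.IsClique (s : Set V) :=
  hP.1 s hs

lemma erase_empty (hP : IsCliquePartition G P) : IsCliquePartition G (P.erase ∅) := by
  refine ⟨fun s hs => hP.isClique (mem_of_mem_erase hs), fun u v huv => ?_⟩
  obtain ⟨s, ⟨hs, hus, hvs⟩, huniq⟩ := hP.2 u v huv
  exact ⟨s, ⟨mem_erase.mpr ⟨ne_empty_of_mem hus, hs⟩, hus, hvs⟩,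
    fun t ⟨ht, hut, hvt⟩ => huniq t ⟨mem_of_mem_erase ht, hut, hvt⟩⟩

lemma piTotal_le (hP : IsCliquePartition G P) : piTotal G ≤ ∑ s ∈ P, #s :=
  Nat.sInf_le ⟨P, hP, rfl⟩

lemma degree_eq_sum (hP : IsCliquePartition G P) (v : V) [Fintype (G.neighborSet v)] :
    G.degree v = ∑ s ∈ P with v ∈ s, (#s - 1) := by
  have hN : G.neighborFinset v = {s ∈ P | v ∈ s}.biUnion (·.erase v) := by
    ext w
    simp only [mem_neighborFinset, mem_biUnion, mem_filter, mem_erase]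
    constructor
    · intro hvw
      obtain ⟨s, ⟨hs, hvs, hws⟩, -⟩ := hP.2 v w hvw
      exact ⟨s, ⟨hs, hvs⟩, hvw.ne', hws⟩
    · rintro ⟨s, ⟨hs, hvs⟩, hwv, hws⟩
      exact hP.isClique hs hvs hws hwv.symm
  have hdisj : (↑{s ∈ P | v ∈ s} : Set (Finset V)).PairwiseDisjoint (·.erase v) := by
    intro s₁ hs₁ s₂ hs₂ hne
    rw [mem_coe, mem_filter] at hs₁ hs₂
    refine disjoint_left.mpr fun w hw₁ hw₂ => hne ?_
    rw [mem_erase] at hw₁ hw₂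
    obtain ⟨s, -, huniq⟩ := hP.2 v w (hP.isClique hs₁.1 hs₁.2 hw₁.2 hw₁.1.symm)
    exact (huniq s₁ ⟨hs₁.1, hs₁.2, hw₁.2⟩).trans (huniq s₂ ⟨hs₂.1, hs₂.2, hw₂.2⟩).symm
  rw [← card_neighborFinset_eq_degree, hN, card_biUnion hdisj]
  exact sum_congr rfl fun s hs => card_erase_of_mem (mem_filter.mp hs).2

lemma cast_degree_eq_sum (hP : IsCliquePartition G P) (v : V) [Fintype (G.neighborSet v)] :
    (G.degree v : ℝ) = ∑ s ∈ P with v ∈ s, ((#s : ℝ) - 1) := by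
  rw [hP.degree_eq_sum, Nat.cast_sum]
  exact sum_congr rfl fun s hs => Nat.cast_pred (card_pos.mpr ⟨v, (mem_filter.mp hs).2⟩)

variable [Fintype V] [DecidableRel G.Adj]

lemma degree_le_mul (hP : IsCliquePartition G P) (v : V) :
    (G.degree v : ℝ) ≤ (G.cliqueNum - 1) * #{s ∈ P | v ∈ s} := by
  rw [hP.cast_degree_eq_sum, mul_comm, ← nsmul_eq_mul, ← sum_const]
  gcongr with s hs
  exact_mod_cast (hP.isClique (mem_filter.mp hs).1).card_le_cliqueNum

lemma card_eq_cliqueNum (hP : IsCliquePartition G P) {v : V}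
    (hv : (G.degree v : ℝ) = (G.cliqueNum - 1) * #{s ∈ P | v ∈ s}) {s : Finset V} (hs : s ∈ P)
    (hvs : v ∈ s) : #s = G.cliqueNum := by
  rw [hP.cast_degree_eq_sum, mul_comm, ← nsmul_eq_mul, ← sum_const] at hv
  have hle : ∀ t ∈ P.filter (v ∈ ·), (#t : ℝ) - 1 ≤ G.cliqueNum - 1 := fun t ht => by
    have := (hP.isClique (mem_filter.mp ht).1).card_le_cliqueNum
    simpa using (Nat.cast_le (α := ℝ)).mpr this
  have := (sum_eq_sum_iff_of_le hle).mp hv s (mem_filter.mpr ⟨hs, hvs⟩)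
  exact_mod_cast sub_left_injective this

lemma ceil_le_card_filter_mem (hP : IsCliquePartition G P) (v : V) :
    ⌈(G.minDegree : ℝ) / ((G.cliqueNum : ℝ) - 1)⌉ ≤ #{s ∈ P | v ∈ s} := by
  rw [Int.ceil_le, Int.cast_natCast]
  rcases le_or_gt ((G.cliqueNum : ℝ) - 1) 0 with hω | hω
  · exact (div_nonpos_of_nonneg_of_nonpos (Nat.cast_nonneg _) hω).trans (Nat.cast_nonneg _)
  rw [div_le_iff₀ hω, mul_comm]
  exact (Nat.cast_le.mpr (G.minDegree_le_degree v)).trans (hP.degree_le_mul v)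

variable {C : ℝ}

lemma mul_le_sum_card (hC : ∀ v, C ≤ #{s ∈ P | v ∈ s}) :
    Fintype.card V * C ≤ ∑ s ∈ P, #s := by
  simpa [sum_card_eq_sum_card_filter_mem] using sum_le_sum fun v (_ : v ∈ univ) => hC v

lemma sum_card_eq_specRad_add (hρ : specRad G = (G.cliqueNum - 1) * C)
    (hk : ∀ v, (#{s ∈ P | v ∈ s} : ℝ) = C) :
    (∑ s ∈ P, #s : ℕ) = specRad G + (Fintype.card V - G.cliqueNum + 1) * C := by
  rw [sum_card_eq_sum_card_filter_mem, Nat.cast_sum, sum_congr rfl fun v _ => hk v, sum_const,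
    card_univ, nsmul_eq_mul, hρ]
  ring

variable [Nonempty V]

lemma specRad_add_lt_sum_card (hP : IsCliquePartition G P) (hω : 2 ≤ G.cliqueNum)
    (hC₁ : 1 ≤ C) (hC : ∀ v, C ≤ #{s ∈ P | v ∈ s}) (hρ : (G.cliqueNum - 1) * C < specRad G) :
    specRad G + (Fintype.card V - G.cliqueNum + 1) * C < ∑ s ∈ P, #s := by
  obtain ⟨y, u, hy⟩ := G.exists_isSubeigenvector_specRad
  set c : ℝ := G.cliqueNum - 1
  set t := ∑ v, y v
  have hc : 1 ≤ c := by linarith [show (2 : ℝ) ≤ G.cliqueNum by exact_mod_cast hω]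
  have hvertex : ∀ v, c * C * (1 - y v) + G.degree v * y v ≤ c * #{s ∈ P | v ∈ s} := by
    intro v
    have h₁ : c * C * (1 - y v) ≤ c * #{s ∈ P | v ∈ s} * (1 - y v) := by
      have := hy.le_one v
      gcongr
      exact hC v
    have h₂ : G.degree v * y v ≤ c * #{s ∈ P | v ∈ s} * y v :=
      mul_le_mul_of_nonneg_right (hP.degree_le_mul v) (hy.nonneg v)
    linarith
  have hsum : c * C * (Fintype.card V - t) + specRad G * t ≤ c * ∑ s ∈ P, #s :=
    calc c * C * (Fintype.card V - t) + specRad G * t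
        ≤ ∑ v, (c * C * (1 - y v) + G.degree v * y v) := by
          simp only [sum_add_distrib, ← mul_sum, sum_sub_distrib, sum_const, card_univ,
            nsmul_eq_mul, mul_one]
          linarith [hy.mul_sum_le_sum_degree_mul]
      _ ≤ ∑ v, c * #{s ∈ P | v ∈ s} := sum_le_sum fun v _ => hvertex v
      _ = c * ∑ s ∈ P, #s := by rw [← mul_sum, sum_card_eq_sum_card_filter_mem, Nat.cast_sum]
  have ht : c < t := by nlinarith [hy.one_add_le_sum]
  have : c * (specRad G + (Fintype.card V - G.cliqueNum + 1) * C) < c * ∑ s ∈ P, #s := by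
    nlinarith
  exact lt_of_mul_lt_mul_left this (by linarith)

lemma specRad_add_le_sum_card (hP : IsCliquePartition G P) (hω : 2 ≤ G.cliqueNum)
    (hC₁ : 1 ≤ C) (hC : ∀ v, C ≤ #{s ∈ P | v ∈ s}) :
    specRad G + (Fintype.card V - G.cliqueNum + 1) * C ≤ ∑ s ∈ P, #s := by
  rcases le_or_gt (specRad G) ((G.cliqueNum - 1) * C) with hρ | hρ
  · linarith [mul_le_sum_card hC]
  · exact (hP.specRad_add_lt_sum_card hω hC₁ hC hρ).le

lemma specRad_eq_and_card_filter_mem_eq (hP : IsCliquePartition G P) (hω : 2 ≤ G.cliqueNum)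
    (hC₁ : 1 ≤ C) (hC : ∀ v, C ≤ #{s ∈ P | v ∈ s})
    (h : (∑ s ∈ P, #s : ℕ) = specRad G + (Fintype.card V - G.cliqueNum + 1) * C) :
    specRad G = (G.cliqueNum - 1) * C ∧ ∀ v, (#{s ∈ P | v ∈ s} : ℝ) = C := by
  have hρ : specRad G = (G.cliqueNum - 1) * C := by
    rcases lt_trichotomy (specRad G) ((G.cliqueNum - 1) * C) with hρ | hρ | hρ
    · linarith [mul_le_sum_card hC]
    · exact hρ
    · linarith [hP.specRad_add_lt_sum_card hω hC₁ hC hρ]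
  refine ⟨hρ, fun v => ((sum_eq_sum_iff_of_le fun v _ => hC v).mp ?_ v (mem_univ v)).symm⟩
  rw [← Nat.cast_sum, ← sum_card_eq_sum_card_filter_mem, h, hρ, sum_const, card_univ,
    nsmul_eq_mul]
  ring

lemma isRegular_and_decomposition_of_sum_card_eq (hP : IsCliquePartition G P)
    (hG : G.Preconnected) (hω : 2 ≤ G.cliqueNum) (hC₁ : 1 ≤ C) (hC : ∀ v, C ≤ #{s ∈ P | v ∈ s})
    (h : (∑ s ∈ P, #s : ℕ) = specRad G + (Fintype.card V - G.cliqueNum + 1) * C) :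
    (∃ d, G.IsRegularOfDegree d) ∧
      ∃ Q : Finset (Finset V), IsCliquePartition G Q ∧ ∀ s ∈ Q, #s = G.cliqueNum := by
  obtain ⟨hρ, hk⟩ := hP.specRad_eq_and_card_filter_mem_eq hω hC₁ hC h
  obtain ⟨y, u, hy⟩ := G.exists_isSubeigenvector_specRad
  have hdeg := hy.degree_eq hG fun v => by rw [hρ, ← hk v]; exact hP.degree_le_mul v
  refine ⟨⟨G.degree u, fun v => by exact_mod_cast (hdeg v).trans (hdeg u).symm⟩,
    P.erase ∅, hP.erase_empty, fun s hs => ?_⟩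
  obtain ⟨v, hv⟩ := nonempty_iff_ne_empty.mpr (ne_of_mem_erase hs)
  exact hP.card_eq_cliqueNum (by rw [hdeg, hρ, hk]) (mem_of_mem_erase hs) hv

lemma sum_card_eq_specRad_add_of_isRegularOfDegree (hP : IsCliquePartition G P)
    (hω : 2 ≤ G.cliqueNum) {d : ℕ} (hd : G.IsRegularOfDegree d)
    (hcard : ∀ s ∈ P, #s = G.cliqueNum) :
    (∑ s ∈ P, #s : ℕ) = specRad G + (Fintype.card V - G.cliqueNum + 1) *
      (⌈(G.minDegree : ℝ) / ((G.cliqueNum : ℝ) - 1)⌉ : ℤ) := by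
  have hc : (G.cliqueNum : ℝ) - 1 ≠ 0 := by
    linarith [show (2 : ℝ) ≤ G.cliqueNum by exact_mod_cast hω]
  have hk : ∀ v, (d : ℝ) = (G.cliqueNum - 1) * #{s ∈ P | v ∈ s} := fun v => by
    rw [← hd v, hP.cast_degree_eq_sum, sum_congr rfl fun s hs => by
      rw [hcard s (mem_filter.mp hs).1], sum_const, nsmul_eq_mul, mul_comm]
  let a := Classical.arbitrary V
  have hC : ((⌈(G.minDegree : ℝ) / ((G.cliqueNum : ℝ) - 1)⌉ : ℤ) : ℝ) = #{s ∈ P | a ∈ s} := by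
    rw [hd.minDegree_eq, hk a, mul_div_cancel_left₀ _ hc, Int.ceil_natCast, Int.cast_natCast]
  refine sum_card_eq_specRad_add (by rw [hd.specRad_eq, hC, hk a]) fun v => ?_
  rw [hC]
  exact mul_left_cancel₀ hc ((hk v).symm.trans (hk a))

end IsCliquePartition

lemma isCliquePartition_cliqueFinset_two [Fintype V] [DecidableEq V] (G : SimpleGraph V)
    [DecidableRel G.Adj] : IsCliquePartition G (G.cliqueFinset 2) := by
  refine ⟨fun s hs => (G.mem_cliqueFinset_iff.mp hs).isClique, fun u v huv => ?_⟩
  have hpair : G.IsNClique 2 {u, v} :=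
    ⟨by simpa using isClique_pair.mpr fun _ => huv, card_pair huv.ne⟩
  refine ⟨{u, v}, ⟨G.mem_cliqueFinset_iff.mpr hpair, by simp, by simp⟩,
    fun s ⟨hs, hus, hvs⟩ => ?_⟩
  refine (eq_of_subset_of_card_le ?_ ?_).symm
  · simpa [insert_subset_iff] using ⟨hus, hvs⟩
  · rw [(G.mem_cliqueFinset_iff.mp hs).card_eq, hpair.card_eq]

lemma exists_isCliquePartition_sum_card_eq_piTotal [Fintype V] [DecidableEq V]
    (G : SimpleGraph V) [DecidableRel G.Adj] :
    ∃ P, IsCliquePartition G P ∧ ∑ s ∈ P, #s = piTotal G :=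
  Nat.sInf_mem (s := {m | ∃ P, IsCliquePartition G P ∧ ∑ s ∈ P, #s = m})
    ⟨_, _, isCliquePartition_cliqueFinset_two G, rfl⟩

/-- Spectral lower bound for the minimum total size `π(G)` of a
clique partition: `π(G) ≥ ρ(G) + (n − ω(G) + 1)·⌈δ(G)/(ω(G)−1)⌉`, with equality if and
only if `G` is regular and admits a `K_{ω(G)}`-decomposition. -/
theorem piTotal_ge_specRad [Fintype V] [DecidableEq V] (G : SimpleGraph V) [DecidableRel G.Adj]
    (hconn : G.Connected) (hedge : G.edgeSet.Nonempty) :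
    specRad G + ((Fintype.card V : ℝ) - G.cliqueNum + 1) *
        (⌈(G.minDegree : ℝ) / ((G.cliqueNum : ℝ) - 1)⌉ : ℤ) ≤ (piTotal G : ℝ) ∧
      ((piTotal G : ℝ) = specRad G + ((Fintype.card V : ℝ) - G.cliqueNum + 1) *
          (⌈(G.minDegree : ℝ) / ((G.cliqueNum : ℝ) - 1)⌉ : ℤ) ↔
        (∃ d, G.IsRegularOfDegree d) ∧
          ∃ P : Finset (Finset V), IsCliquePartition G P ∧ ∀ s ∈ P, s.card = G.cliqueNum) := by
  have := hconn.nonempty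
  obtain ⟨⟨a, b⟩, hab⟩ := hedge
  have : Nontrivial V := ⟨a, b, hab.ne⟩
  have hω := two_le_cliqueNum_of_adj hab
  have hC₁ : (1 : ℝ) ≤ (⌈(G.minDegree : ℝ) / ((G.cliqueNum : ℝ) - 1)⌉ : ℤ) := by
    have hc : (0 : ℝ) < G.cliqueNum - 1 := by
      linarith [show (2 : ℝ) ≤ G.cliqueNum by exact_mod_cast hω]
    exact_mod_cast Int.one_le_ceil_iff.mpr
      (div_pos (Nat.cast_pos.mpr hconn.preconnected.minDegree_pos_of_nontrivial) hc)
  obtain ⟨P, hP, hPsum⟩ := exists_isCliquePartition_sum_card_eq_piTotal G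
  have hC : ∀ v, ((⌈(G.minDegree : ℝ) / ((G.cliqueNum : ℝ) - 1)⌉ : ℤ) : ℝ) ≤ #{s ∈ P | v ∈ s} :=
    fun v => by exact_mod_cast hP.ceil_le_card_filter_mem v
  have hle := hPsum ▸ hP.specRad_add_le_sum_card hω hC₁ hC
  refine ⟨hle, fun heq => ?_, fun ⟨⟨d, hd⟩, Q, hQ, hQcard⟩ => le_antisymm ?_ hle⟩
  · exact hP.isRegular_and_decomposition_of_sum_card_eq hconn.preconnected hω hC₁ hC
      (by rwa [hPsum])
  · rw [← hQ.sum_card_eq_specRad_add_of_isRegularOfDegree hω hd hQcard]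
    exact_mod_cast hQ.piTotal_le
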